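/- Let s ∈ {−1, 1}, l > 0, κ > 0, ρ₀ > 0 with 1 + s·κ·l²·ρ₀/12 > 0, set β = √(1 + s·κ·l²·ρ₀/12), and define u(r) = 1 + s·(r²/l²)·(1 − β). Let C ∈ ℝ, C₀ ∈ ℝ, and C₁ = −s·κ·l²·C / (12·β·(1 − β)). Suppose (a, b) ⊆ (0, ∞) is an interval on which u(r) > 0 and C₁ + C₀·√(u(r)) > 0, and define F(r) = ln(C₁ + C₀·√(u(r))) and g(r) = −(1/2)·ln u(r). Then for all r ∈ (a, b): (u(r)/r³)·(F′(r) + g′(r))·(r² + s·l²·(1 − u(r))) = (κ/12)·C·e^{−F(r)}. -/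

import Mathlib

/-!
Writing `e^F = C₁ + C₀ √u` and `e^{-g} = √u`, differentiating gives
`F' e^F = C₀ (e^{-g})' = -g' (e^F - C₁)`, hence `F' + g' = C₁ g' e^{-F}` with `g' = -u'/(2u)`.
For the interior solution `u = 1 + s (r²/l²)(1 - β)` one has `u' = 2 s r (1 - β)/l²` and
`r² + s l² (1 - u) = β r²`, so the left-hand side collapses to `-s β (1 - β) C₁ e^{-F} / l²`,
which is `(κ/12) C e^{-F}` exactly by the choice of `C₁`.
-/

open Real

theorem deriv_log_add_mul_sqrt_add_deriv_neg_half_log {u : ℝ → ℝ} {u' r : ℝ} (C₀ C₁ : ℝ)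
    (hu : HasDerivAt u u' r) (hur : 0 < u r) (hE : C₁ + C₀ * √(u r) ≠ 0) :
    deriv (fun x => log (C₁ + C₀ * √(u x))) r + deriv (fun x => -(1 / 2) * log (u x)) r =
      -C₁ * u' / (2 * u r * (C₁ + C₀ * √(u r))) := by
  rw [((hu.sqrt hur.ne').const_mul C₀ |>.const_add C₁ |>.log hE).deriv,
    ((hu.log hur.ne').const_mul _).deriv]
  set S := √(u r) with hS
  have hS0 : 0 < S := sqrt_pos.mpr hur
  rw [← sq_sqrt hur.le, ← hS]
  field_simp
  ring

theorem hasDerivAt_one_add_mul_sq_div_mul (s l c r : ℝ) :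
    HasDerivAt (fun x : ℝ => 1 + s * (x ^ 2 / l ^ 2) * c) (s * (2 * r / l ^ 2) * c) r := by
  simpa using (((hasDerivAt_pow 2 r).div_const (l ^ 2)).const_mul s |>.mul_const c).const_add 1

theorem sq_add_mul_one_sub_one_add_mul {s l β : ℝ} (hs : s ^ 2 = 1) (hl : l ≠ 0) (r : ℝ) :
    r ^ 2 + s * l ^ 2 * (1 - (1 + s * (r ^ 2 / l ^ 2) * (1 - β))) = r ^ 2 * β := by
  field_simp
  linear_combination (-(r ^ 2 * (1 - β))) * hs

theorem sqrt_one_add_ne_one {x : ℝ} (hx : x ≠ 0) (hpos : 0 < 1 + x) : √(1 + x) ≠ 1 := by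
  intro h
  have := sq_sqrt hpos.le
  rw [h] at this
  exact hx (by linarith)

/-- Verification that `e^{f} = C₁ + C₀·e^{−g}` (equation (se30)), with `C₁`
given by (se31), solves the summed field equation (se24) for the
constant-density interior solution with `ρ₀ + p = C·e^{−f}`. -/
theorem stmt_7 (s l κ ρ₀ : ℝ) (hs : s = 1 ∨ s = -1) (hl : 0 < l)
    (hκ : 0 < κ) (hρ₀ : 0 < ρ₀) (hpos : 0 < 1 + s * κ * l ^ 2 * ρ₀ / 12)
    (β : ℝ) (hβ : β = Real.sqrt (1 + s * κ * l ^ 2 * ρ₀ / 12))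
    (u : ℝ → ℝ) (hu : ∀ r : ℝ, u r = 1 + s * (r ^ 2 / l ^ 2) * (1 - β))
    (C C₀ C₁ : ℝ) (hC₁ : C₁ = -s * κ * l ^ 2 * C / (12 * β * (1 - β)))
    (a b : ℝ) (hab : Set.Ioo a b ⊆ Set.Ioi (0 : ℝ))
    (hupos : ∀ r ∈ Set.Ioo a b, 0 < u r)
    (hepos : ∀ r ∈ Set.Ioo a b, 0 < C₁ + C₀ * Real.sqrt (u r))
    (F g : ℝ → ℝ)
    (hF : ∀ r : ℝ, F r = Real.log (C₁ + C₀ * Real.sqrt (u r)))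
    (hg : ∀ r : ℝ, g r = -(1 / 2) * Real.log (u r)) :
    ∀ r ∈ Set.Ioo a b,
      (u r / r ^ 3) * (deriv F r + deriv g r) * (r ^ 2 + s * l ^ 2 * (1 - u r)) =
        (κ / 12) * C * Real.exp (-F r) := by
  intro r hr
  have hud : HasDerivAt u (s * (2 * r / l ^ 2) * (1 - β)) r :=
    funext hu ▸ hasDerivAt_one_add_mul_sq_div_mul s l (1 - β) r
  have hs2 : s ^ 2 = 1 := by rcases hs with rfl | rfl <;> norm_num
  have hr0 : r ≠ 0 := (hab hr).ne'
  have hβ0 : β ≠ 0 := (hβ ▸ sqrt_pos.mpr hpos).ne'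
  have hβ1 : 1 - β ≠ 0 := sub_ne_zero.mpr (hβ ▸ sqrt_one_add_ne_one (by
    rcases hs with rfl | rfl <;> positivity) hpos).symm
  have hC : -C₁ * s * (1 - β) * β = κ * l ^ 2 * C / 12 := by
    rw [hC₁]
    field_simp
    linear_combination C * hs2
  have hU := (hupos r hr).ne'
  have hE := hepos r hr
  rw [funext hF, funext hg, deriv_log_add_mul_sqrt_add_deriv_neg_half_log C₀ C₁ hud (hupos r hr)
    hE.ne', hu r, sq_add_mul_one_sub_one_add_mul hs2 hl.ne', ← hu r, exp_neg, exp_log hE]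
  generalize C₁ + C₀ * _ = E at hE ⊢
  field_simp
  linear_combination 12 * hC
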